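/- arXiv:1006.3779 — 7 statements merged into one kernel-verified Lean document; each statement's English description precedes it below -/
import Mathlib

section
/- Let G be a graph with minimum degree at least 1 and let D be an identifying code of G. If v ∈ D is a vertex whose component in the induced subgraph G[D] consists of exactly two vertices (a 2-cluster), then a contradiction follows; equivalently, the induced subgraph G[D] has no connected component with exactly two vertices, provided every vertex of G has degree exactly 3 (G is 3-regular) and G is triangle-free. -/
/-!
A 2-cluster `{u, v}` is an edge of `G` none of whose endpoints has a further neighbour in `D`,
so `N[u] ∩ D = {u, v} = N[v] ∩ D`, and the code does not separate `u` from `v`.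
-/

/-- The closed neighborhood `N[v]`. -/
def closedNbhd {V : Type*} (G : SimpleGraph V) (v : V) : Set V :=
  insert v (G.neighborSet v)

/-- `D` is an identifying code: closed-neighborhood traces on `D` are
nonempty and pairwise distinct. -/
def IsIDCode {V : Type*} (G : SimpleGraph V) (D : Set V) : Prop :=
  (∀ x, (closedNbhd G x ∩ D).Nonempty) ∧
    ∀ x y : V, x ≠ y → closedNbhd G x ∩ D ≠ closedNbhd G y ∩ D

/-- `C` is a cluster: a connected component of the subgraph induced by `D`. -/
def IsCluster {V : Type*} (G : SimpleGraph V) (D C : Set V) : Prop :=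
  C.Nonempty ∧ C ⊆ D ∧ (G.induce C).Connected ∧
    ∀ u ∈ C, ∀ v ∈ D, G.Adj u v → v ∈ C

namespace IsCluster

variable {V : Type*} {G : SimpleGraph V} {D C : Set V} {u : V}

theorem closedNbhd_inter_eq (hC : IsCluster G D C) (hu : u ∈ C) :
    closedNbhd G u ∩ D = closedNbhd G u ∩ C := by
  obtain ⟨-, hCD, -, hclosed⟩ := hC
  ext x
  refine ⟨fun ⟨hx, hxD⟩ => ⟨hx, ?_⟩, fun ⟨hx, hxC⟩ => ⟨hx, hCD hxC⟩⟩
  rcases hx with rfl | hadj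
  · exact hu
  · exact hclosed u hu x hxD hadj

theorem exists_adj_of_nontrivial (hC : IsCluster G D C) (hnt : C.Nontrivial) (hu : u ∈ C) :
    ∃ w ∈ C, G.Adj u w := by
  obtain ⟨-, -, hconn, -⟩ := hC
  have : Nontrivial C := hnt.coe_sort
  obtain ⟨w, huw⟩ := hconn.preconnected.exists_adj_of_nontrivial ⟨u, hu⟩
  exact ⟨w, w.2, huw⟩

theorem adj_of_pair {v : V} (hC : IsCluster G D {u, v}) (huv : u ≠ v) : G.Adj u v := by
  obtain ⟨w, hw, huw⟩ :=
    hC.exists_adj_of_nontrivial (Set.nontrivial_pair huv) (Set.mem_insert u {v})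
  rcases hw with rfl | rfl
  · exact (G.irrefl huw).elim
  · exact huw

end IsCluster

theorem closedNbhd_inter_pair {V : Type*} {G : SimpleGraph V} {u v : V} (h : G.Adj u v) :
    closedNbhd G u ∩ {u, v} = {u, v} :=
  Set.inter_eq_right.mpr (Set.insert_subset_insert (Set.singleton_subset_iff.mpr h))

theorem no_two_cluster_general {V : Type*} (G : SimpleGraph V)
    (D : Set V) (hD : IsIDCode G D) :
    ¬ ∃ C : Set V, IsCluster G D C ∧ C.ncard = 2 := by
  rintro ⟨C, hC, hcard⟩
  obtain ⟨u, v, huv, rfl⟩ := Set.ncard_eq_two.mp hcard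
  have hadj : G.Adj u v := hC.adj_of_pair huv
  apply hD.2 u v huv
  rw [hC.closedNbhd_inter_eq (by simp), hC.closedNbhd_inter_eq (by simp),
    closedNbhd_inter_pair hadj, Set.pair_comm, closedNbhd_inter_pair hadj.symm]

/-- In a 3-regular triangle-free graph, the induced subgraph on an identifying
code has no connected component with exactly two vertices (no 2-clusters). -/
theorem no_two_cluster {V : Type*} (G : SimpleGraph V)
    (hreg : ∀ v : V, (G.neighborSet v).ncard = 3) (htf : G.CliqueFree 3)
    (D : Set V) (hD : IsIDCode G D) :
    ¬ ∃ C : Set V, IsCluster G D C ∧ C.ncard = 2 :=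
  no_two_cluster_general G D hD
end

section
/- Let G be a finite k-regular graph and D an identifying code for G. Then |D| ≥ |V(G)| / (1 + k/2); equivalently, (2 + k)·|D| ≥ 2·|V(G)|. -/
/-! Write `I x = N[x] ∩ D` for the identifier of `x`. Every `d ∈ D` lies in exactly `k + 1`
closed neighbourhoods, so `∑ₓ |I x| = (k + 1)|D|`. Identifiers are nonempty, so `|I x| ≥ 2` except
for the vertices whose identifier is a singleton; as identifiers are distinct, these vertices are
at most `|D|` in number. Hence `2|V| ≤ ∑ₓ |I x| + |D| = (k + 2)|D|`. -/

open Finset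

theorem two_mul_card_le_sum_card_add_card {ι α : Type*} [Fintype ι]
    (s : Finset α) (I : ι → Finset α) (hI : Function.Injective I)
    (hne : ∀ i, (I i).Nonempty) (hsub : ∀ i, I i ⊆ s) :
    2 * Fintype.card ι ≤ ∑ i, #(I i) + #s := by
  set singletons := ({i | #(I i) = 1} : Finset ι)
  have h_singletons : #singletons ≤ #s := by
    simpa using card_le_card_of_injOn I
      (fun i hi => mem_powersetCard.2 ⟨hsub i, (mem_filter.1 hi).2⟩) hI.injOn
      (t := s.powersetCard 1)
  have h_pointwise : ∀ i, 2 ≤ #(I i) + if #(I i) = 1 then 1 else 0 := by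
    intro i
    have := (hne i).card_pos
    split_ifs <;> omega
  calc 2 * Fintype.card ι = ∑ _i : ι, 2 := by simp [mul_comm]
    _ ≤ ∑ i, (#(I i) + if #(I i) = 1 then 1 else 0) := sum_le_sum fun i _ => h_pointwise i
    _ = ∑ i, #(I i) + #singletons := by rw [sum_add_distrib, card_filter]
    _ ≤ ∑ i, #(I i) + #s := by omega

namespace SimpleGraph

variable {V : Type*} (G : SimpleGraph V)

theorem mem_closedNbhd_comm {x y : V} : x ∈ closedNbhd G y ↔ y ∈ closedNbhd G x := by
  simp only [closedNbhd, Set.mem_insert_iff, mem_neighborSet, adj_comm, eq_comm]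

variable [Fintype V] [DecidableEq V] [DecidableRel G.Adj]

def closedNbhdFinset (v : V) : Finset V := insert v (G.neighborFinset v)

@[simp]
theorem coe_closedNbhdFinset (v : V) : (G.closedNbhdFinset v : Set V) = closedNbhd G v := by
  simp [closedNbhdFinset, closedNbhd]

@[simp]
theorem mem_closedNbhdFinset {v w : V} : w ∈ G.closedNbhdFinset v ↔ w ∈ closedNbhd G v := by
  rw [← coe_closedNbhdFinset, Finset.mem_coe]

theorem card_closedNbhdFinset (v : V) : #(G.closedNbhdFinset v) = G.degree v + 1 := by
  rw [closedNbhdFinset, card_insert_of_notMem (by simp), card_neighborFinset_eq_degree]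

theorem sum_card_closedNbhdFinset_inter {k : ℕ} (hreg : G.IsRegularOfDegree k) (s : Finset V) :
    ∑ x, #(G.closedNbhdFinset x ∩ s) = #s * (k + 1) := by
  have h_incidences (d : V) : #({x | d ∈ G.closedNbhdFinset x} : Finset V) = k + 1 := by
    rw [← hreg d, ← card_closedNbhdFinset]
    congr 1
    ext x
    simp [mem_closedNbhd_comm]
  calc ∑ x, #(G.closedNbhdFinset x ∩ s)
      = ∑ x, #(s.bipartiteBelow (fun d x => d ∈ G.closedNbhdFinset x) x) := by
        simp only [bipartiteBelow, filter_mem_eq_inter, inter_comm]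
    _ = ∑ d ∈ s, #(univ.bipartiteAbove (fun d x => d ∈ G.closedNbhdFinset x) d) :=
        (sum_card_bipartiteAbove_eq_sum_card_bipartiteBelow _).symm
    _ = #s * (k + 1) := by simp only [bipartiteAbove, h_incidences, sum_const, smul_eq_mul]

end SimpleGraph

/-- For a finite `k`-regular graph, any identifying code `D` satisfies
`|D| ≥ |V| / (1 + k/2)`, i.e. `(2 + k)·|D| ≥ 2·|V|`. -/
theorem id_code_density_regular {V : Type*} [Fintype V] [DecidableEq V]
    (G : SimpleGraph V) [DecidableRel G.Adj] (k : ℕ)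
    (hreg : G.IsRegularOfDegree k) (D : Set V) (hD : IsIDCode G D) :
    2 * Fintype.card V ≤ (2 + k) * D.ncard := by
  classical
  have hI (x : V) : (↑(G.closedNbhdFinset x ∩ D.toFinset) : Set V) = closedNbhd G x ∩ D := by
    simp
  calc 2 * Fintype.card V
      ≤ ∑ x, #(G.closedNbhdFinset x ∩ D.toFinset) + #D.toFinset :=
        two_mul_card_le_sum_card_add_card _ _
          (fun x y hxy => by_contra fun hne => hD.2 x y hne (by rw [← hI, ← hI, hxy]))
          (fun x => by simpa [← coe_nonempty, hI] using hD.1 x) fun x => inter_subset_right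
    _ = (2 + k) * D.ncard := by
        rw [G.sum_card_closedNbhdFinset_inter hreg, Set.ncard_eq_toFinset_card']; ring
end

section
/- Let G be a finite 3-regular graph and D an identifying code for G. Then 5·|D| ≥ 2·|V(G)|, i.e., the density of D is at least 2/5. -/
open Finset

theorem Finset.two_mul_card_le_sum_add_card_filter_eq_one {α : Type*} (s : Finset α)
    (f : α → ℕ) (hf : ∀ a ∈ s, 1 ≤ f a) :
    2 * #s ≤ ∑ a ∈ s, f a + #{a ∈ s | f a = 1} := by
  rw [card_filter, ← sum_add_distrib, mul_comm, ← smul_eq_mul, ← sum_const]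
  refine sum_le_sum fun a ha => ?_
  have := hf a ha
  split_ifs <;> omega

theorem Finset.card_filter_card_eq_one_le {α β : Type*} [Fintype α] {T : α → Finset β}
    (hT : Function.Injective T) (s : Finset β) (hs : ∀ a, T a ⊆ s) :
    #{a | #(T a) = 1} ≤ #s := by
  calc #{a | #(T a) = 1}
      ≤ #(s.powersetCard 1) :=
        card_le_card_of_injOn T
          (fun a ha => mem_powersetCard.2 ⟨hs a, (mem_filter.1 ha).2⟩) hT.injOn
    _ = #s := by rw [card_powersetCard, Nat.choose_one_right]

namespace SimpleGraph

variable {V : Type*} (G : SimpleGraph V) [Fintype V] [DecidableEq V] [DecidableRel G.Adj]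

def closedNeighborFinset (v : V) : Finset V :=
  insert v (G.neighborFinset v)

variable {G}

theorem coe_closedNeighborFinset (v : V) :
    (G.closedNeighborFinset v : Set V) = closedNbhd G v := by
  simp [closedNeighborFinset, closedNbhd]

theorem mem_closedNeighborFinset_comm {u v : V} :
    u ∈ G.closedNeighborFinset v ↔ v ∈ G.closedNeighborFinset u := by
  simp only [closedNeighborFinset, mem_insert, mem_neighborFinset, eq_comm, G.adj_comm]

theorem card_closedNeighborFinset (v : V) : #(G.closedNeighborFinset v) = G.degree v + 1 := by
  rw [closedNeighborFinset, card_insert_of_notMem (by simp), card_neighborFinset_eq_degree]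

theorem coe_closedNeighborFinset_inter (v : V) (D : Finset V) :
    ((G.closedNeighborFinset v ∩ D : Finset V) : Set V) = closedNbhd G v ∩ D := by
  rw [coe_inter, coe_closedNeighborFinset]

theorem sum_card_closedNeighborFinset_inter (D : Finset V) :
    ∑ x, #(G.closedNeighborFinset x ∩ D) = ∑ c ∈ D, (G.degree c + 1) := by
  calc ∑ x, #(G.closedNeighborFinset x ∩ D)
      = ∑ x, #(D.bipartiteAbove (fun x c => c ∈ G.closedNeighborFinset x) x) := by
        simp only [bipartiteAbove, filter_mem_eq_inter, inter_comm]
    _ = ∑ c ∈ D, #(univ.bipartiteBelow (fun x c => c ∈ G.closedNeighborFinset x) c) :=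
        sum_card_bipartiteAbove_eq_sum_card_bipartiteBelow _
    _ = ∑ c ∈ D, (G.degree c + 1) := by
        simp only [bipartiteBelow, mem_closedNeighborFinset_comm, filter_mem_eq_inter,
          univ_inter, card_closedNeighborFinset]

end SimpleGraph

namespace IsIDCode

open SimpleGraph

variable {V : Type*} [Fintype V] [DecidableEq V] {G : SimpleGraph V} [DecidableRel G.Adj]
  {D : Finset V}

theorem one_le_card_closedNeighborFinset_inter (hD : IsIDCode G D) (x : V) :
    1 ≤ #(G.closedNeighborFinset x ∩ D) := by
  rw [one_le_card, ← coe_nonempty, coe_closedNeighborFinset_inter]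
  exact hD.1 x

theorem injective_closedNeighborFinset_inter (hD : IsIDCode G D) :
    Function.Injective fun x => G.closedNeighborFinset x ∩ D := by
  intro x y hxy
  by_contra hne
  apply hD.2 x y hne
  rw [← coe_closedNeighborFinset_inter, ← coe_closedNeighborFinset_inter]
  exact congrArg _ hxy

theorem two_mul_card_le {d : ℕ} (hdeg : ∀ v, G.degree v ≤ d) (hD : IsIDCode G D) :
    2 * Fintype.card V ≤ (d + 2) * #D := by
  set T := fun x => G.closedNeighborFinset x ∩ D
  have hsum : ∑ x, #(T x) ≤ (d + 1) * #D :=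
    calc ∑ x, #(T x) = ∑ c ∈ D, (G.degree c + 1) := sum_card_closedNeighborFinset_inter D
      _ ≤ ∑ _c ∈ D, (d + 1) := sum_le_sum fun c _ => Nat.add_le_add_right (hdeg c) 1
      _ = (d + 1) * #D := by rw [sum_const, smul_eq_mul, mul_comm]
  have hsingle : #{x | #(T x) = 1} ≤ #D :=
    card_filter_card_eq_one_le hD.injective_closedNeighborFinset_inter D
      fun _ => inter_subset_right
  calc 2 * Fintype.card V ≤ ∑ x, #(T x) + #{x | #(T x) = 1} :=
        two_mul_card_le_sum_add_card_filter_eq_one univ _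
          fun x _ => hD.one_le_card_closedNeighborFinset_inter x
    _ ≤ (d + 2) * #D := by linarith

end IsIDCode

theorem id_code_density_cubic_general {V : Type*} [Fintype V]
    (G : SimpleGraph V) [DecidableRel G.Adj]
    (hreg : G.IsRegularOfDegree 3) (D : Set V) (hD : IsIDCode G D) :
    2 * Fintype.card V ≤ 5 * D.ncard := by
  classical
  rw [Set.ncard_eq_toFinset_card']
  rw [← Set.coe_toFinset D] at hD
  exact hD.two_mul_card_le fun v => (hreg v).le

/-- For a finite 3-regular graph, any identifying code `D` satisfies
`5·|D| ≥ 2·|V|`, i.e. `D` has density at least `2/5`. -/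
theorem id_code_density_cubic {V : Type*} [Fintype V] [DecidableEq V]
    (G : SimpleGraph V) [DecidableRel G.Adj]
    (hreg : G.IsRegularOfDegree 3) (D : Set V) (hD : IsIDCode G D) :
    2 * Fintype.card V ≤ 5 * D.ncard :=
  id_code_density_cubic_general G hreg D hD
end

section
/- Let D be an identifying code for the infinite hexagonal grid H and let C be a 3-cluster of D with center w and leaves u, v. Then for each leaf v of C there exists a vertex of D at distance exactly two from v that does not belong to C. -/
/-- The infinite hexagonal grid on `ℤ × ℤ` ("brick wall" representation):
horizontal edges between `(x, y)` and `(x+1, y)`, and vertical edges between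
`(x, y)` and `(x, y+1)` when `x + y` is even. -/
def hexGrid : SimpleGraph (ℤ × ℤ) where
  Adj a b := (a.2 = b.2 ∧ (a.1 = b.1 + 1 ∨ b.1 = a.1 + 1)) ∨
    (a.1 = b.1 ∧ Even (a.1 + min a.2 b.2) ∧ (b.2 = a.2 + 1 ∨ a.2 = b.2 + 1))
  symm := by
    constructor
    rintro a b (⟨h1, h2⟩ | ⟨h1, h2, h3⟩)
    · exact Or.inl ⟨h1.symm, h2.symm⟩
    · exact Or.inr ⟨h1.symm, by rwa [← h1, min_comm], h3.symm⟩
  loopless := by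
    constructor
    rintro a (⟨h1, h2⟩ | ⟨h1, h2, h3⟩) <;> omega

/-- `v` is a 1-cluster of `D`: it is in `D` and none of its neighbors is. -/
def IsOneCluster {V : Type*} (G : SimpleGraph V) (D : Set V) (v : V) : Prop :=
  v ∈ D ∧ ∀ u, G.Adj v u → u ∉ D

/-- A 1-cluster `v` is crowded if some neighbor `u ∉ D` of `v` has all of its
neighbors in `D`. -/
def IsCrowdedOne {V : Type*} (G : SimpleGraph V) (D : Set V) (v : V) : Prop :=
  ∃ u, G.Adj v u ∧ u ∉ D ∧ ∀ z, G.Adj u z → z ∈ D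

/-- A 3-cluster: a cluster with exactly three vertices. -/
def IsThreeCluster {V : Type*} (G : SimpleGraph V) (D C : Set V) : Prop :=
  IsCluster G D C ∧ C.ncard = 3

/-- `w` is the center of the 3-cluster `C`: it is adjacent to both other
vertices of `C`. -/
def IsCenter {V : Type*} (G : SimpleGraph V) (C : Set V) (w : V) : Prop :=
  w ∈ C ∧ ∀ u ∈ C, u ≠ w → G.Adj w u

/-- An open 3-cluster: the neighbor of the center outside the cluster has no
other neighbor in `D`. -/
def IsOpenThree {V : Type*} (G : SimpleGraph V) (D C : Set V) : Prop :=
  IsThreeCluster G D C ∧ ∀ w u, IsCenter G C w → G.Adj w u → u ∉ C →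
    ∀ z, G.Adj u z → z ≠ w → z ∉ D

/-- A closed 3-cluster: a 3-cluster that is not open. -/
def IsClosedThree {V : Type*} (G : SimpleGraph V) (D C : Set V) : Prop :=
  IsThreeCluster G D C ∧ ¬ IsOpenThree G D C

/-!
A leaf `v` of the path `v - w - u` has two neighbours `a`, `b` other than `w`, and neither lies in
`D`, since `C` is a component of `D`. If `v` were the only code neighbour of both, their traces
`N[a] ∩ D` and `N[b] ∩ D` would coincide. So some code vertex `z ≠ v` is adjacent to `a` or `b`;
as the hexagonal grid has no cycles of length 3 or 4, `z` is at distance two from `v` and is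
neither `w` nor `u`.
-/

lemma SimpleGraph.dist_eq_two_of_adj_of_adj {V : Type*} {G : SimpleGraph V} {u x v : V}
    (hux : G.Adj u x) (hxv : G.Adj x v) (hne : u ≠ v) (hnadj : ¬ G.Adj u v) :
    G.dist u v = 2 := by
  rw [SimpleGraph.dist, edist_eq_two_iff.mpr ⟨hne, hnadj, x, hux, hxv.symm⟩]
  rfl

lemma IsThreeCluster.exists_path_of_not_isCenter {V : Type*} {G : SimpleGraph V} {D C : Set V}
    (hC : IsThreeCluster G D C) {v : V} (hv : v ∈ C) (hleaf : ¬ IsCenter G C v) :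
    ∃ w u, C = {v, w, u} ∧ v ≠ u ∧ G.Adj v w ∧ G.Adj w u ∧ ¬ G.Adj v u := by
  obtain ⟨⟨-, -, hconn, -⟩, hcard⟩ := hC
  obtain ⟨u, huC, huv, hvu⟩ : ∃ u ∈ C, u ≠ v ∧ ¬ G.Adj v u := by
    simpa [IsCenter, hv] using hleaf
  have hnbr : ∀ x ∈ C, ∀ t ∈ C, x ≠ t → ∃ y ∈ C, G.Adj x y := fun x hx t ht hxt => by
    obtain ⟨p⟩ := hconn.preconnected ⟨x, hx⟩ ⟨t, ht⟩
    have hp : ¬ p.Nil := SimpleGraph.Walk.not_nil_of_ne (by simpa using hxt)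
    exact ⟨p.snd, p.snd.2, p.adj_snd hp⟩
  obtain ⟨w, hwC, hvw⟩ := hnbr v hv u huC (Ne.symm huv)
  have hwu : w ≠ u := by rintro rfl; exact hvu hvw
  have hCeq : C = {v, w, u} := by
    refine (Set.eq_of_subset_of_ncard_le ?_ ?_ (Set.finite_of_ncard_pos (by omega))).symm
    · simp [Set.insert_subset_iff, hv, hwC, huC]
    · rw [hcard, Set.ncard_eq_three.mpr ⟨v, w, u, hvw.ne, Ne.symm huv, hwu, rfl⟩]
  obtain ⟨y, hyC, huy⟩ := hnbr u huC v hv huv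
  rw [hCeq] at hyC
  rcases hyC with rfl | rfl | rfl
  · exact absurd huy.symm hvu
  · exact ⟨y, u, hCeq, Ne.symm huv, hvw, huy.symm, hvu⟩
  · exact absurd huy G.irrefl

lemma IsIDCode.exists_adj_mem_ne {V : Type*} {G : SimpleGraph V} {D : Set V}
    (hD : IsIDCode G D) {v a b : V} (hab : a ≠ b) (ha : G.Adj a v) (hb : G.Adj b v)
    (haD : a ∉ D) (hbD : b ∉ D) :
    ∃ x ∈ ({a, b} : Set V), ∃ z ∈ D, G.Adj x z ∧ z ≠ v := by
  -- otherwise `a` and `b` would both have trace `{v} ∩ D`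
  by_contra! h
  have htrace : ∀ x ∈ ({a, b} : Set V), x ∉ D → G.Adj x v → closedNbhd G x ∩ D = {v} ∩ D :=
    fun x hx hxD hxv => by
      ext z
      simp only [closedNbhd, Set.mem_inter_iff, Set.mem_insert_iff, SimpleGraph.mem_neighborSet,
        Set.mem_singleton_iff]
      constructor
      · rintro ⟨rfl | hxz, hzD⟩
        · exact absurd hzD hxD
        · exact ⟨h x hx z hzD hxz, hzD⟩
      · rintro ⟨rfl, hzD⟩
        exact ⟨Or.inr hxv, hzD⟩
  exact hD.2 a b hab <| (htrace a (by simp) haD ha).trans (htrace b (by simp) hbD hb).symm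

lemma hexGrid_adj_iff {p q : ℤ × ℤ} : hexGrid.Adj p q ↔
    (p.2 = q.2 ∧ (p.1 = q.1 + 1 ∨ q.1 = p.1 + 1)) ∨
      (p.1 = q.1 ∧ (p.1 + min p.2 q.2) % 2 = 0 ∧ (q.2 = p.2 + 1 ∨ p.2 = q.2 + 1)) := by
  simp [hexGrid, Int.even_iff]

lemma hexGrid_not_adj_of_adj_of_adj {p q r : ℤ × ℤ} (hpq : hexGrid.Adj p q)
    (hqr : hexGrid.Adj q r) : ¬ hexGrid.Adj p r := by
  rw [hexGrid_adj_iff] at *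
  omega

lemma hexGrid_eq_or_eq_of_adj_of_adj_of_adj_of_adj {p q r s : ℤ × ℤ} (hpq : hexGrid.Adj p q)
    (hqr : hexGrid.Adj q r) (hrs : hexGrid.Adj r s) (hsp : hexGrid.Adj s p) : p = r ∨ q = s := by
  rw [hexGrid_adj_iff] at *
  rcases p with ⟨_, _⟩; rcases q with ⟨_, _⟩; rcases r with ⟨_, _⟩; rcases s with ⟨_, _⟩
  simp only [Prod.mk.injEq] at *
  omega

lemma hexGrid_exists_adj_adj_ne (v w : ℤ × ℤ) :
    ∃ a b, a ≠ b ∧ hexGrid.Adj a v ∧ hexGrid.Adj b v ∧ a ≠ w ∧ b ≠ w := by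
  have hleft : hexGrid.Adj (v.1 - 1, v.2) v := by rw [hexGrid_adj_iff]; omega
  have hright : hexGrid.Adj (v.1 + 1, v.2) v := by rw [hexGrid_adj_iff]; omega
  have hvert : hexGrid.Adj (v.1, if (v.1 + v.2) % 2 = 0 then v.2 + 1 else v.2 - 1) v := by
    rw [hexGrid_adj_iff]; split_ifs <;> omega
  by_cases hl : (v.1 - 1, v.2) = w
  · exact ⟨_, _, by simp, hright, hvert, by grind, by grind⟩
  by_cases hr : (v.1 + 1, v.2) = w
  · exact ⟨_, _, by simp, hleft, hvert, hl, by grind⟩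
  · exact ⟨_, _, by simp; omega, hleft, hright, hl, hr⟩

/-- For each leaf `v` of a 3-cluster `C` (a vertex of `C` that is not the
center), there exists a vertex of `D` at distance exactly two from `v` that is
not in `C`. -/
theorem leaf_has_distance_two_code_vertex (D : Set (ℤ × ℤ))
    (hD : IsIDCode hexGrid D) (C : Set (ℤ × ℤ)) (hC : IsThreeCluster hexGrid D C)
    (v : ℤ × ℤ) (hv : v ∈ C) (hleaf : ¬ IsCenter hexGrid C v) :
    ∃ w ∈ D, w ∉ C ∧ hexGrid.dist v w = 2 := by
  obtain ⟨w, u, hCeq, hvu, hvw, hwu, hnvu⟩ := hC.exists_path_of_not_isCenter hv hleaf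
  have hnotD : ∀ x, hexGrid.Adj x v → x ≠ w → x ∉ D := fun x hxv hxw hxD => by
    have hxC : x ∈ C := hC.1.2.2.2 v hv x hxD hxv.symm
    rw [hCeq] at hxC
    rcases hxC with rfl | rfl | rfl
    exacts [hexGrid.irrefl hxv, hxw rfl, hnvu hxv.symm]
  obtain ⟨a, b, hab, hav, hbv, haw, hbw⟩ := hexGrid_exists_adj_adj_ne v w
  obtain ⟨x, hx, z, hzD, hxz, hzv⟩ :=
    hD.exists_adj_mem_ne hab hav hbv (hnotD a hav haw) (hnotD b hbv hbw)
  obtain ⟨hxv, hxw⟩ : hexGrid.Adj x v ∧ x ≠ w := by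
    rcases hx with rfl | rfl
    exacts [⟨hav, haw⟩, ⟨hbv, hbw⟩]
  have hnvz := hexGrid_not_adj_of_adj_of_adj hxv.symm hxz
  refine ⟨z, hzD, ?_, SimpleGraph.dist_eq_two_of_adj_of_adj hxv.symm hxz (Ne.symm hzv) hnvz⟩
  rw [hCeq]
  rintro (rfl | rfl | rfl)
  · exact hzv rfl
  · exact hnvz hvw
  · exact (hexGrid_eq_or_eq_of_adj_of_adj_of_adj_of_adj hxv.symm hxz hwu.symm hvw.symm).elim
      hvu hxw
end

section
/- Let G be a finite 3-regular triangle-free graph with identifying code D. In the discharging where every v ∈ D gives charge 2/(5k) to each neighbor w ∉ D having k neighbors in D, every vertex of a cluster of G[D] of size at least 3 retains final charge at least 2/5. In particular, a vertex v of such a cluster C with exactly one neighbor in C gives away total charge at most 3/5. -/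
open Finset

section

variable {V : Type*} {G : SimpleGraph V} {D : Set V}

theorem exists_adj_mem_of_preconnected_induce {C : Set V} (hC : (G.induce C).Preconnected)
    (hCcard : 1 < C.ncard) {v : V} (hv : v ∈ C) : ∃ u, G.Adj v u ∧ u ∈ C := by
  have : Nontrivial C := (Set.one_lt_ncard_iff_nontrivial_and_finite.mp hCcard).1.coe_sort
  obtain ⟨u, hvu⟩ := hC.exists_adj_of_nontrivial ⟨v, hv⟩
  exact ⟨u, hvu, u.2⟩

section CodeNeighbors

variable [G.LocallyFinite] [DecidablePred (· ∈ D)]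

variable (G D) in
def codeNeighbors (w : V) : Finset V :=
  (G.neighborFinset w).filter (· ∈ D)

theorem mem_codeNeighbors {w z : V} : z ∈ codeNeighbors G D w ↔ G.Adj w z ∧ z ∈ D := by
  simp [codeNeighbors]

theorem closedNbhd_inter_eq_codeNeighbors {w : V} (hw : w ∉ D) :
    closedNbhd G w ∩ D = codeNeighbors G D w := by
  ext z
  simp only [closedNbhd, Set.mem_inter_iff, Set.mem_insert_iff, SimpleGraph.mem_neighborSet,
    Finset.mem_coe, mem_codeNeighbors]
  constructor
  · rintro ⟨rfl | hwz, hz⟩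
    · exact absurd hz hw
    · exact ⟨hwz, hz⟩
  · rintro ⟨hwz, hz⟩
    exact ⟨Or.inr hwz, hz⟩

theorem IsIDCode.codeNeighbors_ne (hD : IsIDCode G D) {w₁ w₂ : V} (hne : w₁ ≠ w₂)
    (h₁ : w₁ ∉ D) (h₂ : w₂ ∉ D) : codeNeighbors G D w₁ ≠ codeNeighbors G D w₂ := by
  intro h
  apply hD.2 w₁ w₂ hne
  rw [closedNbhd_inter_eq_codeNeighbors h₁, closedNbhd_inter_eq_codeNeighbors h₂, h]

theorem IsIDCode.one_lt_card_codeNeighbors (hD : IsIDCode G D) {v w₁ w₂ : V} (hv : v ∈ D)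
    (hne : w₁ ≠ w₂) (h₁ : w₁ ∉ D) (h₂ : w₂ ∉ D) (hvw₁ : G.Adj v w₁) (hvw₂ : G.Adj v w₂) :
    1 < #(codeNeighbors G D w₁) ∨ 1 < #(codeNeighbors G D w₂) := by
  by_contra! hsmall
  have eq_singleton : ∀ w, G.Adj v w → #(codeNeighbors G D w) ≤ 1 → codeNeighbors G D w = {v} :=
    fun w hvw hw ↦
      have hvmem : v ∈ codeNeighbors G D w := mem_codeNeighbors.mpr ⟨hvw.symm, hv⟩
      eq_singleton_iff_unique_mem.mpr ⟨hvmem, fun x hx ↦ card_le_one.mp hw x hx v hvmem⟩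
  exact hD.codeNeighbors_ne hne h₁ h₂
    ((eq_singleton w₁ hvw₁ hsmall.1).trans (eq_singleton w₂ hvw₂ hsmall.2).symm)

theorem card_filter_not_mem_lt_degree {v u : V} (hvu : G.Adj v u) (hu : u ∈ D) :
    #((G.neighborFinset v).filter (· ∉ D)) < G.degree v := by
  have hsplit : #((G.neighborFinset v).filter (· ∈ D)) +
      #((G.neighborFinset v).filter (· ∉ D)) = G.degree v :=
    card_filter_add_card_filter_not _
  have hcode : 0 < #((G.neighborFinset v).filter (· ∈ D)) :=
    card_pos.mpr ⟨u, mem_filter.mpr ⟨(G.mem_neighborFinset v u).mpr hvu, hu⟩⟩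
  omega

theorem sum_share_le_three_fifths (hreg : G.IsRegularOfDegree 3) (hD : IsIDCode G D)
    {v u : V} (hv : v ∈ D) (hvu : G.Adj v u) (hu : u ∈ D) :
    ∑ w ∈ (G.neighborFinset v).filter (· ∉ D), (2 : ℝ) / (5 * #(codeNeighbors G D w)) ≤ 3 / 5 := by
  have hB : #((G.neighborFinset v).filter (· ∉ D)) ≤ 2 := by
    have := card_filter_not_mem_lt_degree hvu hu
    rw [hreg v] at this
    omega
  set B := (G.neighborFinset v).filter (· ∉ D)
  have hmemB {w} : w ∈ B ↔ G.Adj v w ∧ w ∉ D := by simp [B]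
  have hle : ∀ w ∈ B, (2 : ℝ) / (5 * #(codeNeighbors G D w)) ≤ 2 / 5 := fun w hw ↦ by
    have hvmem : v ∈ codeNeighbors G D w := mem_codeNeighbors.mpr ⟨(hmemB.mp hw).1.symm, hv⟩
    have : (1 : ℝ) ≤ #(codeNeighbors G D w) := by exact_mod_cast card_pos.mpr ⟨v, hvmem⟩
    calc _ ≤ (2 : ℝ) / (5 * 1) := by gcongr
      _ = 2 / 5 := by norm_num
  have hhalf : ∀ w, 1 < #(codeNeighbors G D w) →
      (2 : ℝ) / (5 * #(codeNeighbors G D w)) ≤ 1 / 5 := fun w hw ↦ by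
    have : (2 : ℝ) ≤ #(codeNeighbors G D w) := by exact_mod_cast hw
    calc _ ≤ (2 : ℝ) / (5 * 2) := by gcongr
      _ = 1 / 5 := by norm_num
  rcases hB.lt_or_eq with hB | hB
  · calc _ ≤ #B • ((2 : ℝ) / 5) := sum_le_card_nsmul _ _ _ hle
      _ ≤ 1 • ((2 : ℝ) / 5) := by gcongr; omega
      _ ≤ 3 / 5 := by norm_num
  · classical
    obtain ⟨w₁, w₂, hne, hB⟩ := card_eq_two.mp hB
    have hw₁ : w₁ ∈ B := by simp [hB]
    have hw₂ : w₂ ∈ B := by simp [hB]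
    obtain ⟨hvw₁, h₁⟩ := hmemB.mp hw₁
    obtain ⟨hvw₂, h₂⟩ := hmemB.mp hw₂
    rw [hB, sum_pair hne]
    rcases hD.one_lt_card_codeNeighbors hv hne h₁ h₂ hvw₁ hvw₂ with hw | hw
    · linarith [hhalf w₁ hw, hle w₂ hw₂]
    · linarith [hle w₁ hw₁, hhalf w₂ hw]

end CodeNeighbors

end

theorem three_plus_cluster_vertex_charge_general {V : Type*} [Fintype V]
    (G : SimpleGraph V) [DecidableRel G.Adj]
    (hreg : G.IsRegularOfDegree 3)
    (D : Set V) [DecidablePred (· ∈ D)] (hD : IsIDCode G D)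
    (C : Set V) [DecidablePred (· ∈ C)] (hC : IsCluster G D C)
    (hsize : 3 ≤ C.ncard) (v : V) (hv : v ∈ C) :
    (2 : ℝ) / 5 ≤ 1 - ∑ w ∈ (G.neighborFinset v).filter (fun w => w ∉ D),
        (2 : ℝ) / (5 * ((G.neighborFinset w).filter (fun z => z ∈ D)).card) ∧
    (((G.neighborFinset v).filter (fun u => u ∈ C)).card = 1 →
      ∑ w ∈ (G.neighborFinset v).filter (fun w => w ∉ D),
          (2 : ℝ) / (5 * ((G.neighborFinset w).filter (fun z => z ∈ D)).card) ≤ 3 / 5) := by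
  obtain ⟨-, hCD, hconn, -⟩ := hC
  obtain ⟨u, hvu, hu⟩ := exists_adj_mem_of_preconnected_induce hconn.preconnected (by omega) hv
  have hsent := sum_share_le_three_fifths hreg hD (hCD hv) hvu (hCD hu)
  unfold codeNeighbors at hsent
  exact ⟨by linarith, fun _ ↦ hsent⟩

/-- In the discharging where each `v ∈ D` gives `2/(5k)` to each neighbor
`w ∉ D` having `k` neighbors in `D`, every vertex of a `3⁺`-cluster retains
final charge at least `2/5`; in particular a vertex with exactly one neighbor
in its cluster gives away total charge at most `3/5`. -/
theorem three_plus_cluster_vertex_charge {V : Type*} [Fintype V] [DecidableEq V]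
    (G : SimpleGraph V) [DecidableRel G.Adj]
    (hreg : G.IsRegularOfDegree 3) (htf : G.CliqueFree 3)
    (D : Set V) [DecidablePred (· ∈ D)] (hD : IsIDCode G D)
    (C : Set V) [DecidablePred (· ∈ C)] (hC : IsCluster G D C)
    (hsize : 3 ≤ C.ncard) (v : V) (hv : v ∈ C) :
    (2 : ℝ) / 5 ≤ 1 - ∑ w ∈ (G.neighborFinset v).filter (fun w => w ∉ D),
        (2 : ℝ) / (5 * ((G.neighborFinset w).filter (fun z => z ∈ D)).card) ∧
    (((G.neighborFinset v).filter (fun u => u ∈ C)).card = 1 →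
      ∑ w ∈ (G.neighborFinset v).filter (fun w => w ∉ D),
          (2 : ℝ) / (5 * ((G.neighborFinset w).filter (fun z => z ∈ D)).card) ≤ 3 / 5) :=
  three_plus_cluster_vertex_charge_general G hreg D hD C hC hsize v hv
end

section
/- Let G be a finite 3-regular graph with identifying code D, and let v ∈ D be a 1-cluster (no neighbor of v lies in D). Under the discharging rule where v gives 2/(5k) to each neighbor w ∉ D with k = |N(w) ∩ D| neighbors in D, the vertex v retains charge at least 2/5; i.e., the total charge v gives away is at most 3/5. -/
/-!
A neighbour `w` of a 1-cluster `v` has `v` in its trace, and `w ∉ D`. If `v` were its only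
neighbour in `D`, then `N[w] ∩ D = {v} = N[v] ∩ D`, which the code forbids. Hence every
neighbour of `v` has at least two neighbours in `D`, receives at most `2/10 = 1/5` from `v`,
and `v`, having three neighbours, gives away at most `3/5`.
-/

namespace IsIDCode

variable {V : Type*} {G : SimpleGraph V} {D : Set V} {v w : V}

theorem closedNbhd_inter_eq_singleton (hv : v ∈ D) (hone : ∀ u, G.Adj v u → u ∉ D) :
    closedNbhd G v ∩ D = {v} := by
  ext z
  simp only [closedNbhd, Set.mem_inter_iff, Set.mem_insert_iff, SimpleGraph.mem_neighborSet,
    Set.mem_singleton_iff]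
  constructor
  · rintro ⟨rfl | hvz, hz⟩
    · rfl
    · exact absurd hz (hone z hvz)
  · rintro rfl
    exact ⟨Or.inl rfl, hv⟩

theorem exists_adj_mem_ne_of_adj_one_cluster (hD : IsIDCode G D) (hv : v ∈ D)
    (hone : ∀ u, G.Adj v u → u ∉ D) (hvw : G.Adj v w) : ∃ z, G.Adj w z ∧ z ∈ D ∧ z ≠ v := by
  have htrace : closedNbhd G w ∩ D ≠ {v} :=
    closedNbhd_inter_eq_singleton hv hone ▸ hD.2 w v hvw.ne'
  by_contra! honly
  refine htrace (Set.eq_singleton_iff_unique_mem.2 ⟨⟨Or.inr hvw.symm, hv⟩, ?_⟩)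
  rintro z ⟨rfl | hwz, hz⟩
  · exact absurd hz (hone z hvw)
  · exact honly z hwz hz

theorem two_le_card_neighborFinset_filter_mem [Fintype (G.neighborSet w)]
    [DecidablePred (· ∈ D)] (hD : IsIDCode G D) (hv : v ∈ D)
    (hone : ∀ u, G.Adj v u → u ∉ D) (hvw : G.Adj v w) :
    2 ≤ ((G.neighborFinset w).filter (fun z => z ∈ D)).card := by
  obtain ⟨z, hwz, hz, hzv⟩ := hD.exists_adj_mem_ne_of_adj_one_cluster hv hone hvw
  refine Finset.one_lt_card.2 ⟨z, ?_, v, ?_, hzv⟩ <;>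
    simp only [Finset.mem_filter, SimpleGraph.mem_neighborFinset]
  exacts [⟨hwz, hz⟩, ⟨hvw.symm, hv⟩]

end IsIDCode

theorem one_cluster_retains_charge_general {V : Type*} [Fintype V]
    (G : SimpleGraph V) [DecidableRel G.Adj] (hreg : G.IsRegularOfDegree 3)
    (D : Set V) [DecidablePred (· ∈ D)] (hD : IsIDCode G D)
    (v : V) (hv : v ∈ D) (hone : ∀ u, G.Adj v u → u ∉ D) :
    (∑ w ∈ (G.neighborFinset v).filter (fun w => w ∉ D),
        (2 : ℝ) / (5 * ((G.neighborFinset w).filter (fun z => z ∈ D)).card) ≤ 3 / 5) ∧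
    (2 : ℝ) / 5 ≤ 1 - ∑ w ∈ (G.neighborFinset v).filter (fun w => w ∉ D),
        (2 : ℝ) / (5 * ((G.neighborFinset w).filter (fun z => z ∈ D)).card) := by
  have hshare : ∀ w ∈ (G.neighborFinset v).filter (fun w => w ∉ D),
      (2 : ℝ) / (5 * ((G.neighborFinset w).filter (fun z => z ∈ D)).card) ≤ 1 / 5 := by
    intro w hw
    have hvw : G.Adj v w := (G.mem_neighborFinset v w).1 (Finset.mem_of_mem_filter w hw)
    have hk : (2 : ℝ) ≤ ((G.neighborFinset w).filter (fun z => z ∈ D)).card := by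
      exact_mod_cast hD.two_le_card_neighborFinset_filter_mem hv hone hvw
    rw [div_le_div_iff₀ (by linarith) (by norm_num)]
    linarith
  have hcard : ((G.neighborFinset v).filter (fun w => w ∉ D)).card ≤ 3 :=
    (Finset.card_filter_le _ _).trans (hreg v).le
  have hsum := calc
    ∑ w ∈ (G.neighborFinset v).filter (fun w => w ∉ D),
        (2 : ℝ) / (5 * ((G.neighborFinset w).filter (fun z => z ∈ D)).card)
      ≤ ((G.neighborFinset v).filter (fun w => w ∉ D)).card • (1 / 5 : ℝ) :=
        Finset.sum_le_card_nsmul _ _ _ hshare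
    _ ≤ 3 • (1 / 5 : ℝ) := nsmul_le_nsmul_left (by norm_num) hcard
    _ = 3 / 5 := by norm_num
  exact ⟨hsum, by linarith⟩

/-- In a finite 3-regular graph with identifying code `D`, under the
discharging rule where a 1-cluster `v ∈ D` gives `2/(5k)` to each neighbor
`w ∉ D` with `k = |N(w) ∩ D|`, the vertex `v` gives away total charge at most
`3/5`, hence retains charge at least `2/5`. -/
theorem one_cluster_retains_charge {V : Type*} [Fintype V] [DecidableEq V]
    (G : SimpleGraph V) [DecidableRel G.Adj] (hreg : G.IsRegularOfDegree 3)
    (D : Set V) [DecidablePred (· ∈ D)] (hD : IsIDCode G D)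
    (v : V) (hv : v ∈ D) (hone : ∀ u, G.Adj v u → u ∉ D) :
    (∑ w ∈ (G.neighborFinset v).filter (fun w => w ∉ D),
        (2 : ℝ) / (5 * ((G.neighborFinset w).filter (fun z => z ∈ D)).card) ≤ 3 / 5) ∧
    (2 : ℝ) / 5 ≤ 1 - ∑ w ∈ (G.neighborFinset v).filter (fun w => w ∉ D),
        (2 : ℝ) / (5 * ((G.neighborFinset w).filter (fun z => z ∈ D)).card) :=
  one_cluster_retains_charge_general G hreg D hD v hv hone
end

section
/- For the infinite hexagonal grid H, every identifying code D has density at least 2/5. -/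
/-!
Discharging: every vertex of the ball `V_h` sends charge `1`, split equally among the codewords
of its closed neighbourhood, all of which lie in `V_{h+1}`. A codeword `c` is seen by the at most
four vertices of `N[c]`; at most one of them sees `c` alone, because two such vertices would have
the same trace `{c}`, and the others see at least two codewords. So `c` collects at most
`1 + 3 / 2 = 5 / 2`, and `|V_h| ≤ 5 / 2 * |D ∩ V_{h+1}|`. If the density ratio stayed below some
`q < 2 / 5`, this would make `|V_h|` grow geometrically, whereas it grows only quadratically.
-/

open Filter Asymptotics

section IdentifyingCode

variable {V : Type*} {G : SimpleGraph V} {D : Set V}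

lemma mem_closedNbhd_comm {u v : V} : u ∈ closedNbhd G v ↔ v ∈ closedNbhd G u := by
  simp only [closedNbhd, Set.mem_insert_iff, SimpleGraph.mem_neighborSet, eq_comm, G.adj_comm]

lemma IsIDCode.sum_inv_ncard_le (hD : IsIDCode G D) {c : V} {T : Finset V}
    (hT : ∀ v ∈ T, c ∈ closedNbhd G v ∩ D) :
    ∑ v ∈ T, ((closedNbhd G v ∩ D).ncard : ℝ)⁻¹ ≤ (T.card + 1) / 2 := by
  classical
  set alone := T.filter fun v => (closedNbhd G v ∩ D).ncard = 1
  have h_alone : alone.card ≤ 1 := by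
    refine Finset.card_le_one.2 fun u hu w hw => by_contra fun huw => hD.2 u w huw ?_
    obtain ⟨hu, hu1⟩ := Finset.mem_filter.1 hu
    obtain ⟨hw, hw1⟩ := Finset.mem_filter.1 hw
    obtain ⟨a, ha⟩ := Set.ncard_eq_one.1 hu1
    obtain ⟨b, hb⟩ := Set.ncard_eq_one.1 hw1
    have hca := ha ▸ hT u hu
    have hcb := hb ▸ hT w hw
    rw [ha, hb, ← Set.mem_singleton_iff.1 hca, ← Set.mem_singleton_iff.1 hcb]
  have h_term : ∀ v ∈ T, ((closedNbhd G v ∩ D).ncard : ℝ)⁻¹ ≤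
      1 / 2 + 1 / 2 * if (closedNbhd G v ∩ D).ncard = 1 then 1 else 0 := by
    intro v _
    split_ifs with h
    · norm_num [h]
    · rcases Nat.lt_or_ge (closedNbhd G v ∩ D).ncard 2 with h2 | h2
      · simp [show (closedNbhd G v ∩ D).ncard = 0 by omega]
      · have : (2 : ℝ) ≤ (closedNbhd G v ∩ D).ncard := by exact_mod_cast h2
        rw [inv_le_comm₀ (by linarith) (by norm_num)]
        linarith
  calc ∑ v ∈ T, ((closedNbhd G v ∩ D).ncard : ℝ)⁻¹
      ≤ ∑ v ∈ T, (1 / 2 + 1 / 2 * if (closedNbhd G v ∩ D).ncard = 1 then 1 else 0) :=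
        Finset.sum_le_sum h_term
    _ = (T.card + alone.card) / 2 := by
        rw [Finset.sum_add_distrib, ← Finset.mul_sum, Finset.sum_boole]
        simp only [Finset.sum_const, nsmul_eq_mul]
        ring
    _ ≤ (T.card + 1) / 2 := by
        have : (alone.card : ℝ) ≤ 1 := by exact_mod_cast h_alone
        linarith

lemma IsIDCode.card_le_mul_card (hD : IsIDCode G D) {Δ : ℕ}
    (hΔ : ∀ v, (closedNbhd G v).encard ≤ Δ + 1) {B A : Finset V}
    (hBA : ∀ v ∈ B, closedNbhd G v ∩ D ⊆ A) :
    (B.card : ℝ) ≤ (Δ + 2) / 2 * A.card := by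
  classical
  set w : V → ℝ := fun v => ((closedNbhd G v ∩ D).ncard : ℝ)⁻¹
  have h_charge : ∀ v ∈ B, ∑ c ∈ A with c ∈ closedNbhd G v ∩ D, w v = 1 := by
    intro v hv
    have h_card : (A.filter (· ∈ closedNbhd G v ∩ D)).card = (closedNbhd G v ∩ D).ncard := by
      rw [← Set.ncard_coe_finset, Finset.coe_filter]
      congr 1
      ext c
      exact ⟨fun h => h.2, fun h => ⟨hBA v hv h, h⟩⟩
    have h_pos : 0 < (closedNbhd G v ∩ D).ncard :=
      (Set.ncard_pos ((A.finite_toSet).subset (hBA v hv))).2 (hD.1 v)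
    rw [Finset.sum_const, h_card, nsmul_eq_mul]
    exact mul_inv_cancel₀ (by positivity)
  have h_receive :
      ∀ c ∈ A, ∑ v ∈ B with c ∈ closedNbhd G v ∩ D, w v ≤ (Δ + 2) / 2 := by
    intro c _
    refine (hD.sum_inv_ncard_le fun v hv => (Finset.mem_filter.1 hv).2).trans ?_
    have h_sub : (↑(B.filter (c ∈ closedNbhd G · ∩ D)) : Set V) ⊆ closedNbhd G c :=
      fun v hv => mem_closedNbhd_comm.1 (Finset.mem_filter.1 hv).2.1
    have h_card := (Set.encard_le_encard h_sub).trans (hΔ c)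
    rw [Set.encard_coe_eq_coe_finsetCard] at h_card
    have : ((B.filter (c ∈ closedNbhd G · ∩ D)).card : ℝ) ≤ Δ + 1 := by
      exact_mod_cast h_card
    linarith
  calc (B.card : ℝ) = ∑ v ∈ B, ∑ c ∈ A with c ∈ closedNbhd G v ∩ D, w v := by
        rw [Finset.sum_congr rfl h_charge, Finset.sum_const, nsmul_one]
    _ = ∑ c ∈ A, ∑ v ∈ B with c ∈ closedNbhd G v ∩ D, w v :=
        Finset.sum_comm' fun v c => by simp only [Finset.mem_filter]; tauto
    _ ≤ ∑ _c ∈ A, ((Δ : ℝ) + 2) / 2 := Finset.sum_le_sum h_receive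
    _ = (Δ + 2) / 2 * A.card := by rw [Finset.sum_const, nsmul_eq_mul, mul_comm]

end IdentifyingCode

lemma isBigO_pow_of_mul_le_succ {b : ℕ → ℝ} {r : ℝ} {N : ℕ} (hr : 0 < r) (hbN : 0 < b N)
    (h : ∀ n ≥ N, r * b n ≤ b (n + 1)) : (fun n => r ^ n) =O[atTop] b := by
  have h_geom : ∀ n ≥ N, r ^ n * b N ≤ r ^ N * b n := by
    intro n hn
    induction n, hn using Nat.le_induction with
    | base => rfl
    | succ n hn ih =>
      calc r ^ (n + 1) * b N = r * (r ^ n * b N) := by ring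
        _ ≤ r * (r ^ N * b n) := by gcongr
        _ = r ^ N * (r * b n) := by ring
        _ ≤ r ^ N * b (n + 1) := by gcongr; exact h n hn
  refine IsBigO.of_bound (r ^ N / b N) ?_
  filter_upwards [eventually_ge_atTop N] with n hn
  have hbn : 0 ≤ b n := by
    refine (mul_nonneg_iff_of_pos_left (pow_pos hr N)).1 (le_trans ?_ (h_geom n hn))
    positivity
  rw [Real.norm_of_nonneg (by positivity), Real.norm_of_nonneg hbn, div_mul_eq_mul_div,
    le_div_iff₀ hbN]
  exact h_geom n hn

lemma inv_le_limsup_div_of_le_mul_succ {a b : ℕ → ℝ} {c : ℝ} {k : ℕ} (hc : 0 < c)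
    (hb : ∀ n, 0 < b n) (hbdd : IsBoundedUnder (· ≤ ·) atTop fun n => a n / b n)
    (hpoly : b =O[atTop] fun n => (n : ℝ) ^ k) (hstep : ∀ n, b n ≤ c * a (n + 1)) :
    c⁻¹ ≤ limsup (fun n => a n / b n) atTop := by
  by_contra! hlt
  obtain ⟨q, hLq, hqc⟩ := exists_between hlt
  obtain ⟨N, hN⟩ := eventually_atTop.1 (eventually_lt_of_limsup_lt hLq hbdd)
  have h_grow : ∀ n ≥ N, b n < c * q * b (n + 1) := by
    intro n hn
    have := (div_lt_iff₀ (hb (n + 1))).1 (hN (n + 1) (by omega))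
    calc b n ≤ c * a (n + 1) := hstep n
      _ < c * (q * b (n + 1)) := by gcongr
      _ = c * q * b (n + 1) := by ring
  have hcq : 0 < c * q := pos_of_mul_pos_left ((hb N).trans (h_grow N le_rfl)) (hb _).le
  have hcq1 : c * q < 1 := by
    calc c * q < c * c⁻¹ := by gcongr
      _ = 1 := mul_inv_cancel₀ hc.ne'
  have h_geom : (fun n => (c * q)⁻¹ ^ n) =O[atTop] b := by
    refine isBigO_pow_of_mul_le_succ (inv_pos.2 hcq) (hb N) fun n hn => ?_
    rw [inv_mul_le_iff₀ hcq]
    linarith [h_grow n hn]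
  refine isLittleO_irrefl' (Frequently.of_forall fun n => ?_)
    (h_geom.trans_isLittleO (hpoly.trans_isLittleO
      (isLittleO_pow_const_const_pow_of_one_lt k ((one_lt_inv₀ hcq).2 hcq1))))
  exact norm_ne_zero_iff.2 (pow_ne_zero n (inv_ne_zero hcq.ne'))

lemma SimpleGraph.reachable_of_reachable_succ {V : Type*} {G : SimpleGraph V} (f : ℤ → V)
    (h : ∀ i, G.Reachable (f i) (f (i + 1))) (i j : ℤ) : G.Reachable (f i) (f j) := by
  suffices h0 : ∀ j, G.Reachable (f 0) (f j) from (h0 i).symm.trans (h0 j)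
  intro j
  induction j using Int.induction_on with
  | zero => rfl
  | succ j ih => exact ih.trans (h j)
  | pred j ih => exact ih.trans (by simpa using (h (-j - 1)).symm)

lemma hexGrid_adj_succ_fst (x y : ℤ) : hexGrid.Adj (x, y) (x + 1, y) :=
  Or.inl ⟨rfl, Or.inr rfl⟩

lemma hexGrid_reachable_of_snd_eq (x x' y : ℤ) : hexGrid.Reachable (x, y) (x', y) :=
  SimpleGraph.reachable_of_reachable_succ (fun x => (x, y))
    (fun x => (hexGrid_adj_succ_fst x y).reachable) x x'

/-- The vertical edge above `(x, y)` exists only when `x + y` is even, so we detour through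
column `-y`. -/
lemma hexGrid_reachable_succ_snd (x y : ℤ) : hexGrid.Reachable (x, y) (x, y + 1) := by
  have h_vert : hexGrid.Adj (-y, y) (-y, y + 1) :=
    Or.inr ⟨rfl, by simp, Or.inl rfl⟩
  exact ((hexGrid_reachable_of_snd_eq x (-y) y).trans h_vert.reachable).trans
    (hexGrid_reachable_of_snd_eq (-y) x (y + 1))

lemma hexGrid_connected : hexGrid.Connected :=
  ⟨fun a b => (hexGrid_reachable_of_snd_eq a.1 b.1 a.2).trans
    (SimpleGraph.reachable_of_reachable_succ (fun y => (b.1, y))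
      (hexGrid_reachable_succ_snd b.1) a.2 b.2)⟩

lemma hexGrid_natAbs_add_natAbs_le_length {a b : ℤ × ℤ} (p : hexGrid.Walk a b) :
    (a.1 - b.1).natAbs + (a.2 - b.2).natAbs ≤ p.length := by
  induction p with
  | nil => simp
  | cons h _ ih =>
    rw [SimpleGraph.Walk.length_cons]
    rcases h with ⟨_, _⟩ | ⟨_, _, _⟩ <;> omega

lemma hexGrid_natAbs_add_natAbs_le_dist (a b : ℤ × ℤ) :
    (a.1 - b.1).natAbs + (a.2 - b.2).natAbs ≤ hexGrid.dist a b := by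
  obtain ⟨p, hp⟩ := hexGrid_connected.exists_walk_length_eq_dist a b
  exact hp ▸ hexGrid_natAbs_add_natAbs_le_length p

lemma closedNbhd_hexGrid_encard_le (v : ℤ × ℤ) : (closedNbhd hexGrid v).encard ≤ 3 + 1 := by
  let vert := if Even (v.1 + v.2) then v.2 + 1 else v.2 - 1
  have h_sub : closedNbhd hexGrid v ⊆
      ↑({v, (v.1 + 1, v.2), (v.1 - 1, v.2), (v.1, vert)} : Finset (ℤ × ℤ)) := by
    rintro u (rfl | h)
    · simp
    simp only [Finset.coe_insert, Finset.coe_singleton, Set.mem_insert_iff,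
      Set.mem_singleton_iff, Prod.ext_iff, vert]
    rcases h with ⟨_, _⟩ | ⟨_, h_even, _⟩
    · omega
    · simp only [Int.even_iff] at h_even ⊢
      split_ifs <;> omega
  refine (Set.encard_le_encard h_sub).trans ?_
  rw [Set.encard_coe_eq_coe_finsetCard]
  exact_mod_cast Finset.card_le_four

/-- The ball `V_h` of radius `h`; vertices unreachable from `v₀` have `G.dist v₀ u = 0` and
therefore lie in every ball. -/
def SimpleGraph.distBall {V : Type*} (G : SimpleGraph V) (v₀ : V) (h : ℕ) : Set V :=
  {u | G.dist v₀ u ≤ h}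

lemma SimpleGraph.closedNbhd_subset_distBall_succ {V : Type*} {G : SimpleGraph V} {v₀ v : V}
    {h : ℕ} (hv : v ∈ G.distBall v₀ h) : closedNbhd G v ⊆ G.distBall v₀ (h + 1) := by
  rintro u (rfl | hu)
  · exact hv.trans (Nat.le_succ h)
  · have := hu.reachable.dist_triangle_right v₀
    rw [SimpleGraph.dist_eq_one_iff_adj.2 hu] at this
    exact this.trans (Nat.add_le_add_right hv 1)

lemma distBall_hexGrid_subset_box (v₀ : ℤ × ℤ) (h : ℕ) :
    hexGrid.distBall v₀ h ⊆
      ↑(Finset.Icc (v₀.1 - h) (v₀.1 + h) ×ˢ Finset.Icc (v₀.2 - h) (v₀.2 + h)) := by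
  intro u hu
  have := hexGrid_natAbs_add_natAbs_le_dist v₀ u
  have : hexGrid.dist v₀ u ≤ h := hu
  simp only [Finset.coe_product, Set.mem_prod, Finset.coe_Icc, Set.mem_Icc]
  omega

lemma distBall_hexGrid_finite (v₀ : ℤ × ℤ) (h : ℕ) : (hexGrid.distBall v₀ h).Finite :=
  (Finset.finite_toSet _).subset (distBall_hexGrid_subset_box v₀ h)

lemma ncard_distBall_hexGrid_le (v₀ : ℤ × ℤ) (h : ℕ) :
    (hexGrid.distBall v₀ h).ncard ≤ (2 * h + 1) ^ 2 := by
  refine (Set.ncard_le_ncard (distBall_hexGrid_subset_box v₀ h) (Finset.finite_toSet _)).trans ?_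
  have h_side (z : ℤ) : (Finset.Icc (z - h) (z + h)).card = 2 * h + 1 := by
    rw [Int.card_Icc]; omega
  rw [Set.ncard_coe_finset, Finset.card_product, h_side, h_side, sq]

lemma ncard_distBall_hexGrid_pos (v₀ : ℤ × ℤ) (h : ℕ) :
    0 < (hexGrid.distBall v₀ h).ncard :=
  (Set.ncard_pos (distBall_hexGrid_finite v₀ h)).2 ⟨v₀, by simp [SimpleGraph.distBall]⟩

lemma isBigO_ncard_distBall_hexGrid (v₀ : ℤ × ℤ) :
    (fun h : ℕ => ((hexGrid.distBall v₀ h).ncard : ℝ)) =O[atTop] fun h => (h : ℝ) ^ 2 := by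
  refine IsBigO.of_bound 9 ?_
  filter_upwards [eventually_ge_atTop 1] with h hh
  have h1 : (1 : ℝ) ≤ h := by exact_mod_cast hh
  have h2 : ((hexGrid.distBall v₀ h).ncard : ℝ) ≤ (2 * h + 1) ^ 2 := by
    exact_mod_cast ncard_distBall_hexGrid_le v₀ h
  simp only [Real.norm_natCast, norm_pow]
  nlinarith

lemma IsIDCode.ncard_distBall_hexGrid_le {D : Set (ℤ × ℤ)} (hD : IsIDCode hexGrid D)
    (v₀ : ℤ × ℤ) (h : ℕ) :
    ((hexGrid.distBall v₀ h).ncard : ℝ) ≤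
      5 / 2 * (D ∩ hexGrid.distBall v₀ (h + 1)).ncard := by
  have hB := distBall_hexGrid_finite v₀ h
  have hA := (distBall_hexGrid_finite v₀ (h + 1)).inter_of_right D
  rw [Set.ncard_eq_toFinset_card _ hB, Set.ncard_eq_toFinset_card _ hA]
  convert hD.card_le_mul_card closedNbhd_hexGrid_encard_le fun v hv c hc => ?_ using 2
  · norm_num
  · rw [Set.Finite.coe_toFinset]
    exact ⟨hc.2, SimpleGraph.closedNbhd_subset_distBall_succ (hB.mem_toFinset.1 hv) hc.1⟩

/-- Main theorem: every identifying code for the infinite hexagonal grid has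
density at least `2/5`. -/
theorem hex_id_code_density_two_fifths (D : Set (ℤ × ℤ))
    (hD : IsIDCode hexGrid D) (v₀ : ℤ × ℤ) :
    (2 : ℝ) / 5 ≤ Filter.limsup (fun h : ℕ =>
        ((D ∩ {u | hexGrid.dist v₀ u ≤ h}).ncard : ℝ) /
          ({u : ℤ × ℤ | hexGrid.dist v₀ u ≤ h}.ncard : ℝ)) Filter.atTop := by
  have h_pos (h : ℕ) : (0 : ℝ) < (hexGrid.distBall v₀ h).ncard := by
    exact_mod_cast ncard_distBall_hexGrid_pos v₀ h
  have h_le_one (h : ℕ) :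
      ((D ∩ hexGrid.distBall v₀ h).ncard : ℝ) / (hexGrid.distBall v₀ h).ncard ≤ 1 := by
    refine div_le_one_of_le₀ ?_ (h_pos h).le
    exact_mod_cast Set.ncard_le_ncard Set.inter_subset_right (distBall_hexGrid_finite v₀ h)
  have h_limsup := inv_le_limsup_div_of_le_mul_succ (by norm_num) h_pos
    (isBoundedUnder_of ⟨1, h_le_one⟩) (isBigO_ncard_distBall_hexGrid v₀)
    (hD.ncard_distBall_hexGrid_le v₀)
  norm_num at h_limsup
  exact h_limsup
end
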